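/- arXiv:1905.10241 — 5 statements merged into one kernel-verified Lean document; each statement's English description precedes it below -/
import Mathlib

section
/- Let γ = (γ₀,…,γₙ) with |γ_ℓ| < 1 for all ℓ, and let A_k, B_k be the Schur polynomials associated to γ. Then for all k = 0,…,n and all z in the closed unit disk: |B_k(z)|² − |A_k(z)|² ≥ ∏_{ℓ=0}^{k} (1 − |γ_ℓ|²). In particular B_k has no zeros in the closed unit disk. -/
/-!
One Schur step multiplies `|B|² - |A|²` by `1 - |γ|²` up to an error term: the identity
`|γ z a + b|² - |z a + γ̄ b|² = (1 - |γ|²)(|b|² - |z|²|a|²)` shows that on the closed unit disk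
`|B_{k+1}|² - |A_{k+1}|² ≥ (1 - |γ_{k+1}|²)(|B_k|² - |A_k|²)`. Induction gives the product bound,
which is positive when every `|γ_ℓ| < 1`, so `B_k` cannot vanish there.
-/

open Complex Metric Finset

theorem sq_norm_sub_sq_norm_schur_step (g z a b : ℂ) :
    ‖g * z * a + b‖ ^ 2 - ‖z * a + starRingEnd ℂ g * b‖ ^ 2 =
      (1 - ‖g‖ ^ 2) * (‖b‖ ^ 2 - ‖z‖ ^ 2 * ‖a‖ ^ 2) := by
  simp only [Complex.sq_norm, Complex.normSq_apply, Complex.add_re, Complex.add_im,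
    Complex.mul_re, Complex.mul_im, Complex.conj_re, Complex.conj_im]
  ring

theorem mul_sq_norm_sub_le_schur_step {g z : ℂ} (hg : ‖g‖ ≤ 1) (hz : ‖z‖ ≤ 1) (a b : ℂ) :
    (1 - ‖g‖ ^ 2) * (‖b‖ ^ 2 - ‖a‖ ^ 2) ≤
      ‖g * z * a + b‖ ^ 2 - ‖z * a + starRingEnd ℂ g * b‖ ^ 2 := by
  rw [sq_norm_sub_sq_norm_schur_step]
  have hg' : 0 ≤ 1 - ‖g‖ ^ 2 := sub_nonneg.2 (pow_le_one₀ (norm_nonneg g) hg)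
  have hza : ‖z‖ ^ 2 * ‖a‖ ^ 2 ≤ ‖a‖ ^ 2 :=
    mul_le_of_le_one_left (sq_nonneg _) (pow_le_one₀ (norm_nonneg z) hz)
  gcongr

theorem prod_one_sub_sq_norm_le_schur {γ : ℕ → ℂ} {A B : ℕ → ℂ → ℂ}
    (hA0 : ∀ z, A 0 z = starRingEnd ℂ (γ 0)) (hB0 : ∀ z, B 0 z = 1)
    (hA : ∀ k z, A (k + 1) z = z * A k z + starRingEnd ℂ (γ (k + 1)) * B k z)
    (hB : ∀ k z, B (k + 1) z = γ (k + 1) * z * A k z + B k z)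
    (hγ : ∀ l, ‖γ l‖ ≤ 1) (k : ℕ) {z : ℂ} (hz : ‖z‖ ≤ 1) :
    ∏ l ∈ range (k + 1), (1 - ‖γ l‖ ^ 2) ≤ ‖B k z‖ ^ 2 - ‖A k z‖ ^ 2 := by
  induction k with
  | zero => simp [hA0, hB0]
  | succ k ih =>
    have hγ' : 0 ≤ 1 - ‖γ (k + 1)‖ ^ 2 := sub_nonneg.2 (pow_le_one₀ (norm_nonneg _) (hγ _))
    rw [prod_range_succ, mul_comm, hA, hB]
    calc (1 - ‖γ (k + 1)‖ ^ 2) * ∏ l ∈ range (k + 1), (1 - ‖γ l‖ ^ 2)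
        ≤ (1 - ‖γ (k + 1)‖ ^ 2) * (‖B k z‖ ^ 2 - ‖A k z‖ ^ 2) := by gcongr
      _ ≤ _ := mul_sq_norm_sub_le_schur_step (hγ _) hz _ _

theorem stmt_7_general (n : ℕ) (γ : ℕ → ℂ) (A B : ℕ → ℂ → ℂ)
    (hA0 : ∀ z, A 0 z = (starRingEnd ℂ) (γ 0)) (hB0 : ∀ z, B 0 z = 1)
    (hA : ∀ k z, A (k + 1) z = z * A k z + (starRingEnd ℂ) (γ (k + 1)) * B k z)
    (hB : ∀ k z, B (k + 1) z = γ (k + 1) * z * A k z + B k z)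
    (hγ : ∀ l, ‖γ l‖ < 1) :
    ∀ k ≤ n, ∀ z ∈ Metric.closedBall (0 : ℂ) 1,
      (∏ l ∈ Finset.range (k + 1), (1 - ‖γ l‖ ^ 2)) ≤
          ‖B k z‖ ^ 2 - ‖A k z‖ ^ 2 ∧
        B k z ≠ 0 := by
  intro k _ z hz
  have hbound := prod_one_sub_sq_norm_le_schur hA0 hB0 hA hB (fun l => (hγ l).le) k
    (mem_closedBall_zero_iff.1 hz)
  refine ⟨hbound, fun hBz => ?_⟩
  have hpos : 0 < ∏ l ∈ range (k + 1), (1 - ‖γ l‖ ^ 2) :=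
    prod_pos fun l _ => sub_pos.2 (pow_lt_one₀ (norm_nonneg _) (hγ l) two_ne_zero)
  rw [hBz, norm_zero] at hbound
  nlinarith [sq_nonneg ‖A k z‖]

/-- Lemma 3.7: on the closed unit disk,
`|B_k(z)|² − |A_k(z)|² ≥ ∏_{ℓ=0}^k (1 − |γ_ℓ|²)`; in particular `B_k` has no
zeros in the closed unit disk. -/
theorem stmt_7 (n : ℕ) (γ : ℕ → ℂ) (A B At Bt : ℕ → ℂ → ℂ)
    (hA0 : ∀ z, A 0 z = (starRingEnd ℂ) (γ 0)) (hB0 : ∀ z, B 0 z = 1)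
    (hAt0 : ∀ z, At 0 z = 1) (hBt0 : ∀ z, Bt 0 z = γ 0)
    (hA : ∀ k z, A (k + 1) z = z * A k z + (starRingEnd ℂ) (γ (k + 1)) * B k z)
    (hB : ∀ k z, B (k + 1) z = γ (k + 1) * z * A k z + B k z)
    (hAt : ∀ k z, At (k + 1) z = z * At k z + (starRingEnd ℂ) (γ (k + 1)) * Bt k z)
    (hBt : ∀ k z, Bt (k + 1) z = γ (k + 1) * z * At k z + Bt k z)
    (hγ : ∀ l, ‖γ l‖ < 1) :
    ∀ k ≤ n, ∀ z ∈ Metric.closedBall (0 : ℂ) 1,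
      (∏ l ∈ Finset.range (k + 1), (1 - ‖γ l‖ ^ 2)) ≤
          ‖B k z‖ ^ 2 - ‖A k z‖ ^ 2 ∧
        B k z ≠ 0 :=
  stmt_7_general n γ A B hA0 hB0 hA hB hγ
end

section
/- Let γ = (γ₀,…,γₙ) with |γ_ℓ| < 1 for all ℓ, and let B_k, B̃_k be the Schur polynomials associated to γ (B₀ = 1, B̃₀ = γ₀, B_{k+1}(z) = γ_{k+1} z A_k(z) + B_k(z), B̃_{k+1}(z) = γ_{k+1} z Ã_k(z) + B̃_k(z), with A₀ = conj(γ₀), Ã₀ = 1, A_{k+1}(z) = z A_k(z) + conj(γ_{k+1}) B_k(z), Ã_{k+1}(z) = z Ã_k(z) + conj(γ_{k+1}) B̃_k(z)). Then |B̃_k(z)| < |B_k(z)| for all z in the closed unit disk and all k = 0,…,n. -/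
/-!
Both pairs `(A, B)` and `(Ã, B̃)` obey the same Schur recursion. One step of it multiplies
`|B|² - |A|²` by `1 - |γ|²` after replacing `|A|²` by `|z|² |A|²`, so `|A_k| < |B_k|` on the
closed disk and `B_k` has no zeros there. On the unit circle `B̃_k(z) = z^k · conj (A_k(z))`,
so `|B̃_k| < |B_k|` there, and the maximum modulus principle for `B̃_k / B_k` extends this
to the whole disk.
-/

open Complex Metric ComplexConjugate

theorem normSq_schur_step_sub (g z a b : ℂ) :
    normSq (g * z * a + b) - normSq (z * a + conj g * b) =
      (1 - normSq g) * (normSq b - normSq z * normSq a) := by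
  apply ofReal_injective
  push_cast
  simp only [← mul_conj, map_add, map_mul, conj_conj]
  ring

theorem norm_schur_step_lt {g z a b : ℂ} (hg : ‖g‖ < 1) (hz : ‖z‖ ≤ 1) (hab : ‖a‖ < ‖b‖) :
    ‖z * a + conj g * b‖ < ‖g * z * a + b‖ := by
  have hstep := normSq_schur_step_sub g z a b
  simp only [normSq_eq_norm_sq] at hstep
  have hg2 : 0 < 1 - ‖g‖ ^ 2 := by nlinarith [norm_nonneg g]
  have hza : ‖z‖ ^ 2 * ‖a‖ ^ 2 < ‖b‖ ^ 2 := by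
    calc ‖z‖ ^ 2 * ‖a‖ ^ 2 ≤ ‖a‖ ^ 2 :=
          mul_le_of_le_one_left (sq_nonneg _) (pow_le_one₀ (norm_nonneg z) hz)
      _ < ‖b‖ ^ 2 := by gcongr
  rw [← sq_lt_sq₀ (norm_nonneg _) (norm_nonneg _)]
  nlinarith [mul_pos hg2 (sub_pos.2 hza)]

structure IsSchurRecursion (γ : ℕ → ℂ) (P Q : ℕ → ℂ → ℂ) : Prop where
  succ_fst : ∀ k z, P (k + 1) z = z * P k z + conj (γ (k + 1)) * Q k z
  succ_snd : ∀ k z, Q (k + 1) z = γ (k + 1) * z * P k z + Q k z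

namespace IsSchurRecursion

variable {γ : ℕ → ℂ} {P Q : ℕ → ℂ → ℂ}

theorem differentiable (h : IsSchurRecursion γ P Q) (hP : Differentiable ℂ (P 0))
    (hQ : Differentiable ℂ (Q 0)) (k : ℕ) :
    Differentiable ℂ (P k) ∧ Differentiable ℂ (Q k) := by
  induction k with
  | zero => exact ⟨hP, hQ⟩
  | succ k ih =>
    obtain ⟨hPk, hQk⟩ := ih
    rw [funext (h.succ_fst k), funext (h.succ_snd k)]
    exact ⟨by fun_prop, by fun_prop⟩

theorem norm_fst_lt_norm_snd (h : IsSchurRecursion γ P Q) (hγ : ∀ l, ‖γ l‖ < 1)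
    {z : ℂ} (hz : ‖z‖ ≤ 1) (h0 : ‖P 0 z‖ < ‖Q 0 z‖) (k : ℕ) : ‖P k z‖ < ‖Q k z‖ := by
  induction k with
  | zero => exact h0
  | succ k ih =>
    rw [h.succ_fst, h.succ_snd]
    exact norm_schur_step_lt (hγ (k + 1)) hz ih

theorem eq_pow_mul_conj_of_norm_eq_one {Pt Qt : ℕ → ℂ → ℂ} (h : IsSchurRecursion γ P Q)
    (ht : IsSchurRecursion γ Pt Qt) {z : ℂ} (hz : ‖z‖ = 1)
    (h0 : Qt 0 z = conj (P 0 z) ∧ Pt 0 z = conj (Q 0 z)) (k : ℕ) :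
    Qt k z = z ^ k * conj (P k z) ∧ Pt k z = z ^ k * conj (Q k z) := by
  have hzz : z * conj z = 1 := by simp [mul_conj, normSq_eq_norm_sq, hz]
  induction k with
  | zero => simpa using h0
  | succ k ih =>
    obtain ⟨hQt, hPt⟩ := ih
    rw [ht.succ_fst, ht.succ_snd, h.succ_fst, h.succ_snd, hQt, hPt]
    simp only [map_add, map_mul, conj_conj]
    constructor
    · linear_combination (-(z ^ k * conj (P k z))) * hzz
    · linear_combination (-(conj (γ (k + 1)) * z ^ k * conj (P k z))) * hzz

end IsSchurRecursion

theorem norm_lt_norm_of_forall_mem_frontier {E : Type*} [NormedAddCommGroup E] [NormedSpace ℂ E]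
    [FiniteDimensional ℂ E] [Nontrivial E] {f g : E → ℂ} {U : Set E} (hU : Bornology.IsBounded U)
    (hne : U.Nonempty) (hf : DiffContOnCl ℂ f U) (hg : DiffContOnCl ℂ g U)
    (hg0 : ∀ z ∈ closure U, g z ≠ 0) (hfg : ∀ z ∈ frontier U, ‖f z‖ < ‖g z‖) :
    ∀ z ∈ closure U, ‖f z‖ < ‖g z‖ := by
  have hquot : DiffContOnCl ℂ (fun z => (g z)⁻¹ • f z) U := (hg.inv hg0).smul hf
  have hlt_iff : ∀ z ∈ closure U, ‖f z‖ < ‖g z‖ ↔ ‖(g z)⁻¹ • f z‖ < 1 := fun z hz => by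
    rw [norm_smul, norm_inv, inv_mul_lt_one₀ (norm_pos_iff.2 (hg0 z hz))]
  obtain ⟨w, hw, hmax⟩ := Complex.exists_mem_frontier_isMaxOn_norm hU hne hquot
  have hw1 := (hlt_iff w (frontier_subset_closure hw)).1 (hfg w hw)
  exact fun z hz => (hlt_iff z hz).2 ((hmax hz).out.trans_lt hw1)

/-- Lemma 3.8: `|B̃_k(z)| < |B_k(z)|` on the closed unit disk. -/
theorem stmt_8 (n : ℕ) (γ : ℕ → ℂ) (A B At Bt : ℕ → ℂ → ℂ)
    (hA0 : ∀ z, A 0 z = (starRingEnd ℂ) (γ 0)) (hB0 : ∀ z, B 0 z = 1)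
    (hAt0 : ∀ z, At 0 z = 1) (hBt0 : ∀ z, Bt 0 z = γ 0)
    (hA : ∀ k z, A (k + 1) z = z * A k z + (starRingEnd ℂ) (γ (k + 1)) * B k z)
    (hB : ∀ k z, B (k + 1) z = γ (k + 1) * z * A k z + B k z)
    (hAt : ∀ k z, At (k + 1) z = z * At k z + (starRingEnd ℂ) (γ (k + 1)) * Bt k z)
    (hBt : ∀ k z, Bt (k + 1) z = γ (k + 1) * z * At k z + Bt k z)
    (hγ : ∀ l, ‖γ l‖ < 1) :
    ∀ k ≤ n, ∀ z ∈ Metric.closedBall (0 : ℂ) 1,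
      ‖Bt k z‖ < ‖B k z‖ := by
  have hAB : IsSchurRecursion γ A B := ⟨hA, hB⟩
  have hAtBt : IsSchurRecursion γ At Bt := ⟨hAt, hBt⟩
  have hA_lt_B : ∀ k, ∀ z : ℂ, ‖z‖ ≤ 1 → ‖A k z‖ < ‖B k z‖ := fun k z hz =>
    hAB.norm_fst_lt_norm_snd hγ hz (by simpa [hA0, hB0] using hγ 0) k
  have hdiff (k : ℕ) : Differentiable ℂ (Bt k) ∧ Differentiable ℂ (B k) := by
    refine ⟨(hAtBt.differentiable ?_ ?_ k).2, (hAB.differentiable ?_ ?_ k).2⟩ <;>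
      simp only [funext hA0, funext hB0, funext hAt0, funext hBt0, differentiable_const]
  intro k _ z hz
  rw [← closure_ball (0 : ℂ) one_ne_zero] at hz
  refine norm_lt_norm_of_forall_mem_frontier isBounded_ball (nonempty_ball.2 one_pos)
    (hdiff k).1.diffContOnCl (hdiff k).2.diffContOnCl (fun w hw => ?_) (fun w hw => ?_) z hz
  · rw [closure_ball _ one_ne_zero, mem_closedBall_zero_iff] at hw
    exact norm_pos_iff.1 ((norm_nonneg _).trans_lt (hA_lt_B k w hw))
  · rw [frontier_ball _ one_ne_zero, mem_sphere_zero_iff_norm] at hw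
    have hrev := hAB.eq_pow_mul_conj_of_norm_eq_one hAtBt hw (by simp [hA0, hB0, hAt0, hBt0]) k
    rw [hrev.1, norm_mul, norm_pow, hw, one_pow, one_mul, Complex.norm_conj]
    exact hA_lt_B k w hw.le
end

section
/- Let γ = (γ₀,…,γₙ) with all |γ_ℓ| < 1 and let A_n, B_n, Ãₙ, B̃ₙ be the associated Schur polynomials. For ε with |ε| = 1, define ω_{γ,ε}(z) = (ε z Ãₙ(z) + B̃ₙ(z))/(ε z Aₙ(z) + Bₙ(z)). Then ω_{γ,ε} is analytic on a neighborhood of the closed unit disk and maps the unit circle into the unit circle (i.e., ω_{γ,ε} is a finite Blaschke product). -/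
open Complex ComplexConjugate

/-!
The pairs `(Aₖ, Bₖ)` and `(Ãₖ, B̃ₖ)` obey the same recursion, a Möbius-type step
`(a, b) ↦ (a + γ̄ b, γ a + b)` applied to `(z Aₖ, Bₖ)`. Since
`|γ a + b|² - |a + γ̄ b|² = (1 - |γ|²)(|b|² - |a|²)`, this step preserves `|a| < |b|`, and
so does multiplying `Aₖ₊₁` by `z` when `|z| ≤ 1`; hence `|z Aₙ| < |Bₙ|` on the closed disk
and the denominator `ε z Aₙ + Bₙ` has no zero there. On the unit circle the recursion also
gives `Ãₙ = zⁿ B̄ₙ` and `B̃ₙ = zⁿ Āₙ`, so the numerator is `zⁿ` times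
`ε z B̄ₙ + Āₙ = ε z · conj (ε z Aₙ + Bₙ)`, which has the modulus of the denominator.
-/

lemma normSq_mul_add_sub_normSq_add_conj_mul (g a b : ℂ) :
    normSq (g * a + b) - normSq (a + conj g * b) = (1 - normSq g) * (normSq b - normSq a) := by
  simp only [normSq_apply, add_re, add_im, mul_re, mul_im, conj_re, conj_im]
  ring

lemma norm_add_conj_mul_lt_norm_mul_add {g a b : ℂ} (hg : ‖g‖ < 1) (hab : ‖a‖ < ‖b‖) :
    ‖a + conj g * b‖ < ‖g * a + b‖ := by
  have hg' : normSq g < 1 := by rw [← Complex.sq_norm]; nlinarith [norm_nonneg g]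
  have hab' : normSq a < normSq b := by
    rw [← Complex.sq_norm, ← Complex.sq_norm]; nlinarith [norm_nonneg a]
  have := normSq_mul_add_sub_normSq_add_conj_mul g a b
  rw [norm_def, norm_def]
  exact Real.sqrt_lt_sqrt (normSq_nonneg _) (by nlinarith)

lemma norm_mul_conj_add_conj_of_norm_eq_one {w : ℂ} (hw : ‖w‖ = 1) (a b : ℂ) :
    ‖w * conj b + conj a‖ = ‖w * a + b‖ := by
  have hww : w * conj w = 1 := by rw [mul_conj, normSq_eq_norm_sq, hw]; norm_num
  have : w * conj b + conj a = w * conj (w * a + b) := by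
    simp only [map_add, map_mul]
    linear_combination -(conj a) * hww
  rw [this, norm_mul, hw, one_mul, norm_conj]

lemma mul_add_ne_zero_of_norm_lt {ε a b : ℂ} (hε : ‖ε‖ ≤ 1) (hab : ‖a‖ < ‖b‖) :
    ε * a + b ≠ 0 := by
  intro h
  have : ‖b‖ ≤ ‖a‖ := by
    rw [eq_neg_of_add_eq_zero_right h, norm_neg, norm_mul]
    exact mul_le_of_le_one_left (norm_nonneg a) hε
  exact this.not_gt hab

def SchurRecursion (γ : ℕ → ℂ) (P Q : ℕ → ℂ → ℂ) : Prop :=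
  ∀ k z, P (k + 1) z = z * P k z + conj (γ (k + 1)) * Q k z ∧
    Q (k + 1) z = γ (k + 1) * z * P k z + Q k z

namespace SchurRecursion

variable {γ : ℕ → ℂ} {P Q : ℕ → ℂ → ℂ}

lemma differentiable (h : SchurRecursion γ P Q) (hP : Differentiable ℂ (P 0))
    (hQ : Differentiable ℂ (Q 0)) (k : ℕ) :
    Differentiable ℂ (P k) ∧ Differentiable ℂ (Q k) := by
  induction k with
  | zero => exact ⟨hP, hQ⟩
  | succ k ih =>
    obtain ⟨hPk, hQk⟩ := ih
    rw [funext fun z => (h k z).1, funext fun z => (h k z).2]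
    exact ⟨by fun_prop, by fun_prop⟩

lemma norm_mul_lt (h : SchurRecursion γ P Q) (hγ : ∀ l, ‖γ l‖ < 1) {z : ℂ} (hz : ‖z‖ ≤ 1)
    (h0 : ‖z * P 0 z‖ < ‖Q 0 z‖) (k : ℕ) : ‖z * P k z‖ < ‖Q k z‖ := by
  induction k with
  | zero => exact h0
  | succ k ih =>
    rw [(h k z).1, (h k z).2, mul_assoc, norm_mul]
    calc ‖z‖ * ‖z * P k z + conj (γ (k + 1)) * Q k z‖
        ≤ ‖z * P k z + conj (γ (k + 1)) * Q k z‖ :=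
          mul_le_of_le_one_left (norm_nonneg _) hz
      _ < ‖γ (k + 1) * (z * P k z) + Q k z‖ := norm_add_conj_mul_lt_norm_mul_add (hγ _) ih

lemma eq_pow_mul_conj_of_norm_eq_one {Pt Qt : ℕ → ℂ → ℂ} (h : SchurRecursion γ P Q)
    (ht : SchurRecursion γ Pt Qt) {z : ℂ} (hz : ‖z‖ = 1) (hP0 : Pt 0 z = conj (Q 0 z))
    (hQ0 : Qt 0 z = conj (P 0 z)) (k : ℕ) :
    Pt k z = z ^ k * conj (Q k z) ∧ Qt k z = z ^ k * conj (P k z) := by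
  have hzz : z * conj z = 1 := by rw [mul_conj, normSq_eq_norm_sq, hz]; norm_num
  induction k with
  | zero => simpa using ⟨hP0, hQ0⟩
  | succ k ih =>
    rw [(ht k z).1, (ht k z).2, (h k z).1, (h k z).2, ih.1, ih.2]
    simp only [map_add, map_mul, conj_conj]
    constructor
    · linear_combination (-(z ^ k) * conj (γ (k + 1)) * conj (P k z)) * hzz
    · linear_combination (-(z ^ k) * conj (P k z)) * hzz

end SchurRecursion

/-- For `|ε| = 1`, the function `ω_{γ,ε} = (ε z Ãₙ + B̃ₙ)/(ε z Aₙ + Bₙ)` is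
analytic on a neighborhood of the closed unit disk and maps the unit circle
into the unit circle (it is a finite Blaschke product). -/
theorem stmt_10 (n : ℕ) (γ : ℕ → ℂ) (A B At Bt : ℕ → ℂ → ℂ)
    (hA0 : ∀ z, A 0 z = (starRingEnd ℂ) (γ 0)) (hB0 : ∀ z, B 0 z = 1)
    (hAt0 : ∀ z, At 0 z = 1) (hBt0 : ∀ z, Bt 0 z = γ 0)
    (hA : ∀ k z, A (k + 1) z = z * A k z + (starRingEnd ℂ) (γ (k + 1)) * B k z)
    (hB : ∀ k z, B (k + 1) z = γ (k + 1) * z * A k z + B k z)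
    (hAt : ∀ k z, At (k + 1) z = z * At k z + (starRingEnd ℂ) (γ (k + 1)) * Bt k z)
    (hBt : ∀ k z, Bt (k + 1) z = γ (k + 1) * z * At k z + Bt k z)
    (hγ : ∀ l, ‖γ l‖ < 1)
    (ε : ℂ) (hε : ‖ε‖ = 1) :
    (∃ U : Set ℂ, IsOpen U ∧ Metric.closedBall (0 : ℂ) 1 ⊆ U ∧
      DifferentiableOn ℂ
        (fun z => (ε * z * At n z + Bt n z) / (ε * z * A n z + B n z)) U) ∧
    ∀ z : ℂ, ‖z‖ = 1 →
      ‖(ε * z * At n z + Bt n z) / (ε * z * A n z + B n z)‖ = 1 := by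
  have hAB : SchurRecursion γ A B := fun k z => ⟨hA k z, hB k z⟩
  have hAtBt : SchurRecursion γ At Bt := fun k z => ⟨hAt k z, hBt k z⟩
  obtain ⟨hdA, hdB⟩ := hAB.differentiable (by rw [funext hA0]; fun_prop)
    (by rw [funext hB0]; fun_prop) n
  obtain ⟨hdAt, hdBt⟩ := hAtBt.differentiable (by rw [funext hAt0]; fun_prop)
    (by rw [funext hBt0]; fun_prop) n
  have hdiffDen : Differentiable ℂ fun z => ε * z * A n z + B n z := by fun_prop
  have hden : ∀ z : ℂ, ‖z‖ ≤ 1 → ε * z * A n z + B n z ≠ 0 := fun z hz => by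
    have h0 : ‖z * A 0 z‖ < ‖B 0 z‖ := by
      rw [hA0, hB0, norm_mul, norm_conj, norm_one]
      nlinarith [norm_nonneg z, norm_nonneg (γ 0), hγ 0]
    rw [mul_assoc]
    exact mul_add_ne_zero_of_norm_lt hε.le (hAB.norm_mul_lt hγ hz h0 n)
  refine ⟨⟨{z | ε * z * A n z + B n z ≠ 0}, isOpen_ne_fun hdiffDen.continuous continuous_const,
    fun z hz => hden z (mem_closedBall_zero_iff.mp hz), ?_⟩, fun z hz => ?_⟩
  · exact DifferentiableOn.div (by fun_prop) hdiffDen.differentiableOn fun z hz => hz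
  · obtain ⟨hAtz, hBtz⟩ := hAB.eq_pow_mul_conj_of_norm_eq_one hAtBt hz
      (by simp [hAt0, hB0]) (by simp [hBt0, hA0]) n
    have hnum : ε * z * At n z + Bt n z = z ^ n * (ε * z * conj (B n z) + conj (A n z)) := by
      rw [hAtz, hBtz]; ring
    have hεz : ‖ε * z‖ = 1 := by rw [norm_mul, hε, hz, one_mul]
    rw [norm_div, hnum, norm_mul, norm_pow, hz, one_pow, one_mul,
      norm_mul_conj_add_conj_of_norm_eq_one hεz, div_self (norm_ne_zero_iff.mpr (hden z hz.le))]
end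

section
/- Let γ = (γ₀,…,γₙ) with all |γ_ℓ| < 1, and let A_n, B_n, Ãₙ, B̃ₙ be the Schur polynomials. For z ∈ 𝔻 define ρ(z) = (conj(Bₙ(z)) B̃ₙ(z) − |z|² conj(Aₙ(z)) Ãₙ(z)) / (|Bₙ(z)|² − |z|² |Aₙ(z)|²) and r(z) = |z|^{n+1} ∏_{ℓ=0}^{n} (1 − |γ_ℓ|²) / (|Bₙ(z)|² − |z|² |Aₙ(z)|²). Then for any analytic ω : 𝔻 → 𝔻̄ of the form ω(z) = (z Ãₙ(z) ω*(z) + B̃ₙ(z))/(z Aₙ(z) ω*(z) + Bₙ(z)) with ω* : 𝔻 → 𝔻̄ analytic, one has |ω(z) − ρ(z)| ≤ r(z) for all z ∈ 𝔻. -/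
open Complex Metric Set Finset

/-!
The map `w ↦ (z Ã w + B̃)/(z A w + B)` sends the closed unit disk into a closed disk as soon as
`|z A| < |B|`; a direct computation identifies its center `ρ` and radius `|z| |Ã B − A B̃| / D`,
with `D = |B|² − |z|² |A|²`. For the Schur polynomials, `D > 0` on `𝔻` by induction, since
`Dₖ₊₁ = (1 − |z|²) |Bₖ₊₁|² + |z|² (1 − |γₖ₊₁|²) Dₖ`, and the determinant `Ãₙ Bₙ − Aₙ B̃ₙ`
equals `zⁿ ∏ (1 − |γ_ℓ|²)`.
-/

open ComplexConjugate

namespace Complex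

lemma sq_norm_mul_add_sub_sq_norm_conj_mul_add (w b c : ℂ) :
    ‖w * c + b‖ ^ 2 - ‖conj w * b + c‖ ^ 2 = (1 - ‖w‖ ^ 2) * (‖b‖ ^ 2 - ‖c‖ ^ 2) := by
  apply ofReal_injective
  push_cast
  simp only [← mul_conj', map_add, map_mul, conj_conj]
  ring

lemma norm_conj_mul_add_le_norm_mul_add {w b c : ℂ} (hw : ‖w‖ ≤ 1) (hcb : ‖c‖ ≤ ‖b‖) :
    ‖conj w * b + c‖ ≤ ‖w * c + b‖ := by
  refine le_of_pow_le_pow_left₀ two_ne_zero (norm_nonneg _) ?_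
  have hw' : 0 ≤ 1 - ‖w‖ ^ 2 := by nlinarith [norm_nonneg w]
  have hcb' : 0 ≤ ‖b‖ ^ 2 - ‖c‖ ^ 2 := by nlinarith [norm_nonneg c]
  nlinarith [sq_norm_mul_add_sub_sq_norm_conj_mul_add w b c, mul_nonneg hw' hcb']

lemma mobius_sub_center_eq (a b a' b' z w : ℂ)
    (hD : ‖b‖ ^ 2 - ‖z‖ ^ 2 * ‖a‖ ^ 2 ≠ 0) (hY : z * a * w + b ≠ 0) :
    (z * a' * w + b') / (z * a * w + b) -
        (conj b * b' - ((‖z‖ : ℝ) : ℂ) ^ 2 * conj a * a') /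
          ((‖b‖ ^ 2 - ‖z‖ ^ 2 * ‖a‖ ^ 2 : ℝ) : ℂ) =
      (a' * b - a * b') * z * conj (conj w * b + z * a) /
        (((‖b‖ ^ 2 - ‖z‖ ^ 2 * ‖a‖ ^ 2 : ℝ) : ℂ) * (z * a * w + b)) := by
  have hD' : ((‖b‖ ^ 2 - ‖z‖ ^ 2 * ‖a‖ ^ 2 : ℝ) : ℂ) ≠ 0 := ofReal_ne_zero.mpr hD
  rw [div_sub_div _ _ hY hD', div_eq_div_iff (mul_ne_zero hY hD') (mul_ne_zero hD' hY)]
  push_cast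
  simp only [← mul_conj', map_add, map_mul, conj_conj]
  ring

lemma norm_mobius_sub_center_le (a b a' b' z w : ℂ) (hw : ‖w‖ ≤ 1) (hab : ‖z * a‖ < ‖b‖) :
    ‖(z * a' * w + b') / (z * a * w + b) -
        (conj b * b' - ((‖z‖ : ℝ) : ℂ) ^ 2 * conj a * a') /
          ((‖b‖ ^ 2 - ‖z‖ ^ 2 * ‖a‖ ^ 2 : ℝ) : ℂ)‖ ≤
      ‖z‖ * ‖a' * b - a * b'‖ / (‖b‖ ^ 2 - ‖z‖ ^ 2 * ‖a‖ ^ 2) := by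
  have hD : 0 < ‖b‖ ^ 2 - ‖z‖ ^ 2 * ‖a‖ ^ 2 := by
    rw [← mul_pow, ← norm_mul, sub_pos]
    exact pow_lt_pow_left₀ hab (norm_nonneg _) two_ne_zero
  have hzaw : ‖z * a * w‖ < ‖b‖ := by
    rw [norm_mul]
    exact (mul_le_of_le_one_right (norm_nonneg _) hw).trans_lt hab
  have hY : 0 < ‖z * a * w + b‖ := by
    rw [add_comm]
    exact (sub_pos.mpr hzaw).trans_le (norm_sub_le_norm_add _ _)
  have hnum : ‖conj w * b + z * a‖ ≤ ‖z * a * w + b‖ := by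
    rw [mul_comm (z * a)]
    exact norm_conj_mul_add_le_norm_mul_add hw hab.le
  rw [mobius_sub_center_eq a b a' b' z w hD.ne' (norm_pos_iff.mp hY), norm_div, norm_mul,
    norm_mul, norm_mul, norm_conj, Complex.norm_of_nonneg hD.le, div_le_div_iff₀ (by positivity) hD]
  calc ‖a' * b - a * b'‖ * ‖z‖ * ‖conj w * b + z * a‖ * (‖b‖ ^ 2 - ‖z‖ ^ 2 * ‖a‖ ^ 2)
      ≤ ‖a' * b - a * b'‖ * ‖z‖ * ‖z * a * w + b‖ * (‖b‖ ^ 2 - ‖z‖ ^ 2 * ‖a‖ ^ 2) := by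
        gcongr
    _ = ‖z‖ * ‖a' * b - a * b'‖ * ((‖b‖ ^ 2 - ‖z‖ ^ 2 * ‖a‖ ^ 2) * ‖z * a * w + b‖) := by ring

lemma sq_norm_schur_step (a b z g : ℂ) :
    ‖g * z * a + b‖ ^ 2 - ‖z‖ ^ 2 * ‖z * a + conj g * b‖ ^ 2 =
      (1 - ‖z‖ ^ 2) * ‖g * z * a + b‖ ^ 2 +
        ‖z‖ ^ 2 * (1 - ‖g‖ ^ 2) * (‖b‖ ^ 2 - ‖z‖ ^ 2 * ‖a‖ ^ 2) := by
  apply ofReal_injective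
  push_cast
  simp only [← mul_conj', map_add, map_mul, conj_conj]
  ring

end Complex

section SchurPolynomials

variable {γ : ℕ → ℂ} {A B At Bt : ℕ → ℂ → ℂ}

lemma schur_denom_pos (hA0 : ∀ z, A 0 z = conj (γ 0)) (hB0 : ∀ z, B 0 z = 1)
    (hA : ∀ k z, A (k + 1) z = z * A k z + conj (γ (k + 1)) * B k z)
    (hB : ∀ k z, B (k + 1) z = γ (k + 1) * z * A k z + B k z)
    (hγ : ∀ l, ‖γ l‖ < 1) {z : ℂ} (hz : ‖z‖ < 1) (k : ℕ) :
    0 < ‖B k z‖ ^ 2 - ‖z‖ ^ 2 * ‖A k z‖ ^ 2 := by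
  have hz2 : ‖z‖ ^ 2 < 1 := pow_lt_one₀ (norm_nonneg z) hz two_ne_zero
  induction k with
  | zero =>
    have hγ2 : ‖γ 0‖ ^ 2 < 1 := pow_lt_one₀ (norm_nonneg _) (hγ 0) two_ne_zero
    rw [hA0, hB0, norm_one, Complex.norm_conj]
    nlinarith [sq_nonneg ‖z‖, sq_nonneg ‖γ 0‖]
  | succ k ih =>
    rw [hA, hB, Complex.sq_norm_schur_step]
    have hγ2 : 0 < 1 - ‖γ (k + 1)‖ ^ 2 := by
      have := pow_lt_one₀ (norm_nonneg _) (hγ (k + 1)) two_ne_zero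
      linarith
    have hfirst : 0 ≤ (1 - ‖z‖ ^ 2) * ‖γ (k + 1) * z * A k z + B k z‖ ^ 2 := by
      apply mul_nonneg <;> nlinarith
    rcases eq_or_ne z 0 with rfl | hz0
    · simpa using ih
    · have := mul_pos (mul_pos (pow_pos (norm_pos_iff.mpr hz0) 2) hγ2) ih
      linarith

lemma schur_det (hA0 : ∀ z, A 0 z = conj (γ 0)) (hB0 : ∀ z, B 0 z = 1)
    (hAt0 : ∀ z, At 0 z = 1) (hBt0 : ∀ z, Bt 0 z = γ 0)
    (hA : ∀ k z, A (k + 1) z = z * A k z + conj (γ (k + 1)) * B k z)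
    (hB : ∀ k z, B (k + 1) z = γ (k + 1) * z * A k z + B k z)
    (hAt : ∀ k z, At (k + 1) z = z * At k z + conj (γ (k + 1)) * Bt k z)
    (hBt : ∀ k z, Bt (k + 1) z = γ (k + 1) * z * At k z + Bt k z) (z : ℂ) (k : ℕ) :
    At k z * B k z - A k z * Bt k z =
      z ^ k * ((∏ l ∈ range (k + 1), (1 - ‖γ l‖ ^ 2) : ℝ) : ℂ) := by
  induction k with
  | zero =>
    rw [hAt0, hB0, hA0, hBt0, prod_range_one]
    push_cast
    rw [← Complex.mul_conj']
    ring
  | succ k ih =>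
    rw [hAt, hB, hA, hBt, prod_range_succ]
    push_cast at ih ⊢
    rw [← Complex.mul_conj']
    linear_combination (z * (1 - γ (k + 1) * conj (γ (k + 1)))) * ih

end SchurPolynomials

theorem stmt_15_general (n : ℕ) (γ : ℕ → ℂ) (A B At Bt : ℕ → ℂ → ℂ)
    (hA0 : ∀ z, A 0 z = (starRingEnd ℂ) (γ 0)) (hB0 : ∀ z, B 0 z = 1)
    (hAt0 : ∀ z, At 0 z = 1) (hBt0 : ∀ z, Bt 0 z = γ 0)
    (hA : ∀ k z, A (k + 1) z = z * A k z + (starRingEnd ℂ) (γ (k + 1)) * B k z)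
    (hB : ∀ k z, B (k + 1) z = γ (k + 1) * z * A k z + B k z)
    (hAt : ∀ k z, At (k + 1) z = z * At k z + (starRingEnd ℂ) (γ (k + 1)) * Bt k z)
    (hBt : ∀ k z, Bt (k + 1) z = γ (k + 1) * z * At k z + Bt k z)
    (hγ : ∀ l, ‖γ l‖ < 1)
    (ωs : ℂ → ℂ)
    (hωsb : ∀ z ∈ Metric.ball (0 : ℂ) 1, ‖ωs z‖ ≤ 1) :
    ∀ z ∈ Metric.ball (0 : ℂ) 1,
      ‖((z * At n z * ωs z + Bt n z) / (z * A n z * ωs z + B n z) -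
            ((starRingEnd ℂ) (B n z) * Bt n z -
                ((‖z‖ : ℝ) : ℂ) ^ 2 * (starRingEnd ℂ) (A n z) * At n z) /
              (((‖B n z‖ ^ 2 - ‖z‖ ^ 2 * ‖A n z‖ ^ 2 : ℝ)) : ℂ))‖ ≤
        ‖z‖ ^ (n + 1) *
            (∏ l ∈ Finset.range (n + 1), (1 - ‖γ l‖ ^ 2)) /
          (‖B n z‖ ^ 2 - ‖z‖ ^ 2 * ‖A n z‖ ^ 2) := by
  intro z hz
  have hD := schur_denom_pos hA0 hB0 hA hB hγ (mem_ball_zero_iff.mp hz) n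
  have hab : ‖z * A n z‖ < ‖B n z‖ := by
    rw [sub_pos, ← mul_pow, ← norm_mul] at hD
    exact lt_of_pow_lt_pow_left₀ 2 (norm_nonneg _) hD
  have hprod : 0 ≤ ∏ l ∈ range (n + 1), (1 - ‖γ l‖ ^ 2) :=
    prod_nonneg fun l _ => sub_nonneg.mpr (pow_le_one₀ (norm_nonneg _) (hγ l).le)
  refine (norm_mobius_sub_center_le _ _ _ _ z (ωs z) (hωsb z hz) hab).trans_eq ?_
  rw [schur_det hA0 hB0 hAt0 hBt0 hA hB hAt hBt, norm_mul, norm_pow, Complex.norm_of_nonneg hprod,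
    pow_succ]
  ring

/-- The Schur value-region: any `ω` of the form
`ω = (z Ãₙ ω* + B̃ₙ)/(z Aₙ ω* + Bₙ)` with `ω* : 𝔻 → 𝔻̄` analytic satisfies
`|ω(z) − ρ(z)| ≤ r(z)` on `𝔻`, where `ρ` and `r` are the center and radius
functions. -/
theorem stmt_15 (n : ℕ) (γ : ℕ → ℂ) (A B At Bt : ℕ → ℂ → ℂ)
    (hA0 : ∀ z, A 0 z = (starRingEnd ℂ) (γ 0)) (hB0 : ∀ z, B 0 z = 1)
    (hAt0 : ∀ z, At 0 z = 1) (hBt0 : ∀ z, Bt 0 z = γ 0)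
    (hA : ∀ k z, A (k + 1) z = z * A k z + (starRingEnd ℂ) (γ (k + 1)) * B k z)
    (hB : ∀ k z, B (k + 1) z = γ (k + 1) * z * A k z + B k z)
    (hAt : ∀ k z, At (k + 1) z = z * At k z + (starRingEnd ℂ) (γ (k + 1)) * Bt k z)
    (hBt : ∀ k z, Bt (k + 1) z = γ (k + 1) * z * At k z + Bt k z)
    (hγ : ∀ l, ‖γ l‖ < 1)
    (ωs : ℂ → ℂ) (hωs : DifferentiableOn ℂ ωs (Metric.ball 0 1))
    (hωsb : ∀ z ∈ Metric.ball (0 : ℂ) 1, ‖ωs z‖ ≤ 1) :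
    ∀ z ∈ Metric.ball (0 : ℂ) 1,
      ‖((z * At n z * ωs z + Bt n z) / (z * A n z * ωs z + B n z) -
            ((starRingEnd ℂ) (B n z) * Bt n z -
                ((‖z‖ : ℝ) : ℂ) ^ 2 * (starRingEnd ℂ) (A n z) * At n z) /
              (((‖B n z‖ ^ 2 - ‖z‖ ^ 2 * ‖A n z‖ ^ 2 : ℝ)) : ℂ))‖ ≤
        ‖z‖ ^ (n + 1) *
            (∏ l ∈ Finset.range (n + 1), (1 - ‖γ l‖ ^ 2)) /
          (‖B n z‖ ^ 2 - ‖z‖ ^ 2 * ‖A n z‖ ^ 2) :=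
  stmt_15_general n γ A B At Bt hA0 hB0 hAt0 hBt0 hA hB hAt hBt hγ ωs hωsb
end

section
/- Let η₁,…,η_m be points on the unit circle, β₁,…,β_m ∈ (0, 2] with ∑ βᵢ = 2, and for each i let z_{i1},…,z_{i p_i} be points outside the closed unit disk (|z_{iℓ}| > 1), with 0 ≤ p_i ≤ n + 1. Let h be analytic on 𝔻 with h'(z) = z^{n+j+1} / ∏_{i=1}^{m} ((1 − η_i γ₀) ∏_{ℓ=1}^{p_i} (1 − z/z_{iℓ}))^{β_i} for some j ≥ −1 and constant γ₀ with |γ₀| < 1 (branches chosen so h' is analytic and nonzero away from 0). Then Re(1 + z h''(z)/h'(z)) > 0 for all z ∈ 𝔻. -/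
/-!
On the disk, `h' z = z ^ N / ∏ᵢ Cᵢ ∏ₗ (1 - z / z_{iℓ}) ^ βᵢ` with `N = n + j + 1` and constants
`Cᵢ ≠ 0`, so taking logarithmic derivatives gives
`z h''/h' = N + ∑ᵢ βᵢ ∑ₗ wᵢₗ / (1 - wᵢₗ)` with `wᵢₗ = z / z_{iℓ}` in the unit disk.
Since `Re (w / (1 - w)) > -1/2` there and `pᵢ ≤ n + 1`, the double sum has real part
`> -(n + 1) ∑ᵢ βᵢ / 2 = -(n + 1)`, while `1 + N ≥ n + 1`.
-/

open Complex Metric Set Finset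

lemma norm_div_lt_one_of_norm_lt {z a : ℂ} (hza : ‖z‖ < ‖a‖) : ‖z / a‖ < 1 := by
  rwa [norm_div, div_lt_one ((norm_nonneg z).trans_lt hza)]

lemma one_sub_div_mem_slitPlane {z a : ℂ} (hza : ‖z‖ < ‖a‖) : 1 - z / a ∈ slitPlane := by
  simpa [sub_eq_add_neg] using mem_slitPlane_of_norm_lt_one (z := -(z / a))
    (by simpa using norm_div_lt_one_of_norm_lt hza)

lemma logDeriv_cpow_const {f : ℂ → ℂ} {x : ℂ} (hf : DifferentiableAt ℂ f x)
    (hx : f x ∈ slitPlane) (c : ℂ) :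
    logDeriv (fun w => f w ^ c) x = c * logDeriv f x := by
  have hx0 := slitPlane_ne_zero hx
  have hxc : f x ^ c ≠ 0 := by simp [hx0]
  rw [logDeriv_apply, (hf.hasDerivAt.cpow_const hx).deriv, logDeriv_apply,
    cpow_sub _ _ hx0, cpow_one]
  field_simp

lemma differentiableAt_one_sub_div_cpow {z a : ℂ} (hza : ‖z‖ < ‖a‖) (c : ℂ) :
    DifferentiableAt ℂ (fun w => (1 - w / a) ^ c) z :=
  (by fun_prop : DifferentiableAt ℂ (fun w => 1 - w / a) z).cpow_const
    (one_sub_div_mem_slitPlane hza)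

lemma one_sub_div_cpow_ne_zero {z a : ℂ} (hza : ‖z‖ < ‖a‖) (c : ℂ) : (1 - z / a) ^ c ≠ 0 := by
  simp [slitPlane_ne_zero (one_sub_div_mem_slitPlane hza)]

lemma mul_logDeriv_one_sub_div_cpow {z a : ℂ} (hza : ‖z‖ < ‖a‖) (c : ℂ) :
    z * logDeriv (fun w => (1 - w / a) ^ c) z = -c * (z / a / (1 - z / a)) := by
  have hslit := one_sub_div_mem_slitPlane hza
  have hslit0 := slitPlane_ne_zero hslit
  have hderiv : deriv (fun w => 1 - w / a) z = -a⁻¹ := by simp [one_div]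
  rw [logDeriv_cpow_const (f := fun w => 1 - w / a) (by fun_prop) hslit, logDeriv_apply, hderiv]
  field_simp

section
variable {ι : Type*} {s : Finset ι} {z C c : ℂ} {a : ι → ℂ}

lemma differentiableAt_const_mul_prod_one_sub_div_cpow (ha : ∀ l ∈ s, ‖z‖ < ‖a l‖) :
    DifferentiableAt ℂ (fun w => C * ∏ l ∈ s, (1 - w / a l) ^ c) z :=
  (DifferentiableAt.fun_finsetProd fun l hl =>
    differentiableAt_one_sub_div_cpow (ha l hl) c).const_mul C

lemma const_mul_prod_one_sub_div_cpow_ne_zero (hC : C ≠ 0) (ha : ∀ l ∈ s, ‖z‖ < ‖a l‖) :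
    C * ∏ l ∈ s, (1 - z / a l) ^ c ≠ 0 :=
  mul_ne_zero hC <| prod_ne_zero_iff.mpr fun l hl => one_sub_div_cpow_ne_zero (ha l hl) c

lemma mul_logDeriv_const_mul_prod_one_sub_div_cpow (hC : C ≠ 0) (ha : ∀ l ∈ s, ‖z‖ < ‖a l‖) :
    z * logDeriv (fun w => C * ∏ l ∈ s, (1 - w / a l) ^ c) z =
      -c * ∑ l ∈ s, z / a l / (1 - z / a l) := by
  rw [logDeriv_const_mul z C hC, logDeriv_prod, mul_sum, mul_sum]
  · exact sum_congr rfl fun l hl => mul_logDeriv_one_sub_div_cpow (ha l hl) c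
  · exact fun l hl => one_sub_div_cpow_ne_zero (ha l hl) c
  · exact fun l hl => differentiableAt_one_sub_div_cpow (ha l hl) c

end

section
variable {ι : Type*} {κ : ι → Type*} {s : Finset ι} {t : ∀ i, Finset (κ i)} {z : ℂ}
  {C c : ι → ℂ} {a : ∀ i, κ i → ℂ}

lemma mul_logDeriv_zpow_div_prod_const_mul_prod_one_sub_div_cpow (N : ℤ) (hz : z ≠ 0)
    (hC : ∀ i ∈ s, C i ≠ 0) (ha : ∀ i ∈ s, ∀ l ∈ t i, ‖z‖ < ‖a i l‖) :
    z * logDeriv (fun w => w ^ N / ∏ i ∈ s, (C i * ∏ l ∈ t i, (1 - w / a i l) ^ c i)) z =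
      N + ∑ i ∈ s, c i * ∑ l ∈ t i, z / a i l / (1 - z / a i l) := by
  rw [logDeriv_div, logDeriv_zpow, logDeriv_prod, mul_sub, mul_sum, mul_div_cancel₀ _ hz,
    sub_eq_add_neg, ← sum_neg_distrib]
  · congr 1
    exact sum_congr rfl fun i hi => by
      rw [mul_logDeriv_const_mul_prod_one_sub_div_cpow (hC i hi) (ha i hi), neg_mul, neg_neg]
  · exact fun i hi => const_mul_prod_one_sub_div_cpow_ne_zero (hC i hi) (ha i hi)
  · exact fun i hi => differentiableAt_const_mul_prod_one_sub_div_cpow (ha i hi)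
  · exact zpow_ne_zero N hz
  · exact prod_ne_zero_iff.mpr fun i hi =>
      const_mul_prod_one_sub_div_cpow_ne_zero (hC i hi) (ha i hi)
  · exact differentiableAt_zpow.mpr (.inl hz)
  · exact DifferentiableAt.fun_finsetProd fun i hi =>
      differentiableAt_const_mul_prod_one_sub_div_cpow (ha i hi)

end

/-- `Re (w / (1 - w)) + 1/2 = (1 - ‖w‖²) / (2 ‖1 - w‖²)`. -/
lemma neg_half_lt_re_div_one_sub {w : ℂ} (hw : ‖w‖ < 1) : -(1 / 2) < (w / (1 - w)).re := by
  have h1 : 1 - w ≠ 0 := sub_ne_zero.mpr (by rintro rfl; simp at hw)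
  have hpos : 0 < normSq (1 - w) := normSq_pos.mpr h1
  have hw2 : w.re ^ 2 + w.im ^ 2 < 1 := by
    rw [← sq_lt_one_iff₀ (norm_nonneg w), Complex.sq_norm, normSq_apply] at hw; nlinarith
  rw [div_re, normSq_apply] at *
  simp only [sub_re, sub_im, one_re, one_im] at *
  rw [← add_div, neg_lt, ← neg_div, div_lt_iff₀ hpos]
  nlinarith

lemma neg_half_succ_lt_sum_re_div_one_sub {ι : Type*} {s : Finset ι} {w : ι → ℂ} {N : ℕ}
    (hs : #s ≤ N + 1) (hw : ∀ l ∈ s, ‖w l‖ < 1) :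
    -((N + 1 : ℝ) / 2) < ∑ l ∈ s, (w l / (1 - w l)).re := by
  rcases s.eq_empty_or_nonempty with rfl | hne
  · simp; positivity
  have hs' : (#s : ℝ) ≤ N + 1 := by exact_mod_cast hs
  calc -((N + 1 : ℝ) / 2) ≤ ∑ _l ∈ s, -(1 / 2 : ℝ) := by simp; linarith
    _ < _ := sum_lt_sum_of_nonempty hne fun l hl => neg_half_lt_re_div_one_sub (hw l hl)

theorem stmt_19_general (n : ℕ) (j : ℤ) (hj : -1 ≤ j) (m : ℕ)
    (η : Fin m → ℂ) (hη : ∀ i, ‖η i‖ = 1)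
    (β : Fin m → ℝ) (hβ0 : ∀ i, 0 < β i)
    (hβsum : ∑ i, β i = 2)
    (p : Fin m → ℕ) (hp : ∀ i, p i ≤ n + 1)
    (zp : (i : Fin m) → Fin (p i) → ℂ) (hzp : ∀ i l, 1 < ‖zp i l‖)
    (γ₀ : ℂ) (hγ₀ : ‖γ₀‖ < 1)
    (h : ℂ → ℂ)
    (hh' : ∀ z ∈ Metric.ball (0 : ℂ) 1, deriv h z =
      z ^ ((n : ℤ) + j + 1) /
        ∏ i, ((1 - η i * γ₀) ^ ((β i : ℂ)) *
          ∏ l, (1 - z / zp i l) ^ ((β i : ℂ)))) :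
    ∀ z ∈ Metric.ball (0 : ℂ) 1,
      0 < (1 + z * deriv (deriv h) z / deriv h z).re := by
  intro z hz
  rcases eq_or_ne z 0 with rfl | hz0
  · simp
  have hza : ∀ i l, ‖z‖ < ‖zp i l‖ := fun i l => (mem_ball_zero_iff.mp hz).trans (hzp i l)
  have hC : ∀ i, (1 - η i * γ₀) ^ (β i : ℂ) ≠ 0 := fun i => by
    have : η i * γ₀ ≠ 1 := fun h1 => by simpa [hη i, hγ₀.ne] using congrArg norm h1
    simp [sub_ne_zero.mpr this.symm]
  have hlog : z * deriv (deriv h) z / deriv h z = (((n : ℤ) + j + 1 : ℤ) : ℂ) +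
      ∑ i, (β i : ℂ) * ∑ l, z / zp i l / (1 - z / zp i l) := by
    rw [mul_div_assoc, ← logDeriv_apply, (logDeriv_congr_nhds
      (Filter.eventually_of_mem (isOpen_ball.mem_nhds hz) hh')).eq_of_nhds]
    exact mul_logDeriv_zpow_div_prod_const_mul_prod_one_sub_div_cpow _ hz0
      (fun i _ => hC i) (fun i _ l _ => hza i l)
  have hterm : ∀ i, -((n + 1 : ℝ) / 2) < ∑ l, (z / zp i l / (1 - z / zp i l)).re := fun i =>
    neg_half_succ_lt_sum_re_div_one_sub (by simpa using hp i)
      fun l _ => norm_div_lt_one_of_norm_lt (hza i l)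
  have hsum : -(n + 1 : ℝ) < ∑ i, β i * ∑ l, (z / zp i l / (1 - z / zp i l)).re :=
    calc -(n + 1 : ℝ) = ∑ i, β i * -((n + 1 : ℝ) / 2) := by rw [← sum_mul, hβsum]; ring
      _ < _ := sum_lt_sum_of_nonempty (nonempty_of_sum_ne_zero (f := β) (by simp [hβsum]))
        fun i _ => mul_lt_mul_of_pos_left (hterm i) (hβ0 i)
  have hN : (n : ℝ) ≤ ((n : ℤ) + j + 1 : ℤ) := by exact_mod_cast (by omega : (n : ℤ) ≤ n + j + 1)
  simp only [hlog, add_re, one_re, intCast_re, re_sum, re_ofReal_mul]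
  linarith

/-- Convexity of the extremal integrand: if `h' (z) = z^{n+j+1} / ∏ᵢ ((1−ηᵢγ₀)
∏ₗ (1−z/z_{iℓ}))^{βᵢ}` with `|ηᵢ| = 1`, `0 < βᵢ ≤ 2`, `∑ βᵢ = 2`, `pᵢ ≤ n+1`,
`|z_{iℓ}| > 1`, `j ≥ −1` and `|γ₀| < 1`, then `Re (1 + z h''(z)/h'(z)) > 0`
on `𝔻`. -/
theorem stmt_19 (n : ℕ) (j : ℤ) (hj : -1 ≤ j) (m : ℕ)
    (η : Fin m → ℂ) (hη : ∀ i, ‖η i‖ = 1)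
    (β : Fin m → ℝ) (hβ0 : ∀ i, 0 < β i) (hβ2 : ∀ i, β i ≤ 2)
    (hβsum : ∑ i, β i = 2)
    (p : Fin m → ℕ) (hp : ∀ i, p i ≤ n + 1)
    (zp : (i : Fin m) → Fin (p i) → ℂ) (hzp : ∀ i l, 1 < ‖zp i l‖)
    (γ₀ : ℂ) (hγ₀ : ‖γ₀‖ < 1)
    (h : ℂ → ℂ) (hh : DifferentiableOn ℂ h (Metric.ball 0 1))
    (hh' : ∀ z ∈ Metric.ball (0 : ℂ) 1, deriv h z =
      z ^ ((n : ℤ) + j + 1) /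
        ∏ i, ((1 - η i * γ₀) ^ ((β i : ℂ)) *
          ∏ l, (1 - z / zp i l) ^ ((β i : ℂ)))) :
    ∀ z ∈ Metric.ball (0 : ℂ) 1,
      0 < (1 + z * deriv (deriv h) z / deriv h z).re :=
  stmt_19_general n j hj m η hη β hβ0 hβsum p hp zp hzp γ₀ hγ₀ h hh'
end
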